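/- arXiv:math/0410355 — 2 statements merged into one kernel-verified Lean document; each statement's English description precedes it below -/
import Mathlib

section
/- (Toy model mimicking the standard random walk: path probabilities.) Let G = {g₁, g₂, g₃, g₄} = {(1,0), (0,1), (−1,0), (0,−1)} ⊂ ℤ², let Ω = {1,2,3}, and let e : {0,1,2,3} × {1,2,3,4} × Ω → G be a function such that for every incoming index i ∈ {1,2,3,4} and every state ω ∈ Ω, the map j ↦ e(j, i, ω) is a bijection from {0,1,2,3} onto G. Let K₄ be the 4-baker's map on [0,1)², K₄(y₁,y₂) = ({4y₁}, (y₂+⌊4y₁⌋)/4). For an environment λ = (λ_γ)_{γ∈ℤ²} ∈ Ω^{ℤ²} and an initial point x = (y, i) ∈ [0,1)² × {1,2,3,4}, define recursively: γ₀ = 0, y₀ = y, i₀ = i, and for k ≥ 0: h_{k+1} = e(⌊4 (y_k)₁⌋, i_k, λ_{γ_k}), γ_{k+1} = γ_k + h_{k+1}, y_{k+1} = K₄(y_k), and i_{k+1} = the index of h_{k+1} in G. Let μ₁ be the product of the uniform probability measure on {1,2,3,4} and Lebesgue measure on [0,1)². Then for every environment λ ∈ Ω^{ℤ²}, every n ≥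 1 and every word (w₁, …, w_n) ∈ G^n, μ₁({x : h_k(x, λ) = w_k for all k = 1, …, n}) = 4^{−n}. -/
open MeasureTheory ENNReal

/-- The four primitive directions `g₁ = E, g₂ = N, g₃ = W, g₄ = S` of `ℤ²`. -/
def dirG : Fin 4 → ℤ × ℤ := ![(1, 0), (0, 1), (-1, 0), (0, -1)]

/-- The `4`-baker's map `K₄(y₁, y₂) = ({4 y₁}, (y₂ + ⌊4 y₁⌋)/4)`. -/
noncomputable def baker4 (y : ℝ × ℝ) : ℝ × ℝ :=
  (Int.fract (4 * y.1), (y.2 + (⌊(4 : ℝ) * y.1⌋ : ℝ)) / 4)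

/-- The base-4 digit `⌊4 y⌋ ∈ {0,1,2,3}` of `y ∈ [0,1)`, as an element of `Fin 4`. -/
noncomputable def digit4 (y : ℝ) : Fin 4 :=
  ⟨(⌊(4 : ℝ) * y⌋).toNat % 4, Nat.mod_lt _ (by norm_num)⟩

/-- The trajectory `k ↦ (γ_k, y_k, i_k)` of the point `x = (y, i)` in the environment
`lam`, where `e j i ω` is the index in `G` of the exit direction `e(j, i, ω)`:
`γ₀ = 0`, `y₀ = y`, `i₀ = i`, and `h_{k+1} = g_{e(⌊4 (y_k)₁⌋, i_k, lam γ_k)}`,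
`γ_{k+1} = γ_k + h_{k+1}`, `y_{k+1} = K₄ y_k`, `i_{k+1} = index of h_{k+1}`. -/
noncomputable def traj4 (e : Fin 4 → Fin 4 → Fin 3 → Fin 4) (lam : ℤ × ℤ → Fin 3)
    (x : (ℝ × ℝ) × Fin 4) : ℕ → (ℤ × ℤ) × ((ℝ × ℝ) × Fin 4)
  | 0 => ((0, 0), x)
  | k + 1 =>
      let s := traj4 e lam x k
      let j : Fin 4 := e (digit4 s.2.1.1) s.2.2 (lam s.1)
      (s.1 + dirG j, (baker4 s.2.1, j))

/-- auxiliary: the doubling (quadrupling) map on `[0,1)`. -/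
noncomputable def T4 (t : ℝ) : ℝ := Int.fract (4 * t)

lemma dirG_injective : Function.Injective dirG := by decide

lemma traj4_fst1 (e : Fin 4 → Fin 4 → Fin 3 → Fin 4) (lam : ℤ × ℤ → Fin 3)
    (x : (ℝ × ℝ) × Fin 4) (m : ℕ) :
    (traj4 e lam x m).2.1.1 = T4^[m] x.1.1 := by
  induction m with
  | zero => rfl
  | succ m ih =>
      rw [Function.iterate_succ_apply', ← ih]
      rfl

/-- the deterministic walk with step indices `jj` started from incoming index `i`. -/
def walkSt (jj : ℕ → Fin 4) (i : Fin 4) : ℕ → (ℤ × ℤ) × Fin 4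
  | 0 => ((0, 0), i)
  | k + 1 => ((walkSt jj i k).1 + dirG (jj k), jj k)

lemma traj_key (e : Fin 4 → Fin 4 → Fin 3 → Fin 4) (lam : ℤ × ℤ → Fin 3)
    (jj : ℕ → Fin 4) (i : Fin 4) (y : ℝ × ℝ) (d : ℕ → Fin 4)
    (hde : ∀ k, e (d k) (walkSt jj i k).2 (lam (walkSt jj i k).1) = jj k)
    (m : ℕ) (hd : ∀ k < m, digit4 (T4^[k] y.1) = d k) :
    (traj4 e lam (y, i) m).1 = (walkSt jj i m).1 ∧
      (traj4 e lam (y, i) m).2.2 = (walkSt jj i m).2 := by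
  induction m with
  | zero => exact ⟨rfl, rfl⟩
  | succ m ih =>
      obtain ⟨h1, h2⟩ := ih (fun k hk => hd k (hk.trans (Nat.lt_succ_self m)))
      have hdig : digit4 ((traj4 e lam (y, i) m).2.1.1) = d m := by
        rw [traj4_fst1]; exact hd m (Nat.lt_succ_self m)
      have hstep : e (digit4 ((traj4 e lam (y, i) m).2.1.1))
          (traj4 e lam (y, i) m).2.2 (lam (traj4 e lam (y, i) m).1) = jj m := by
        rw [hdig, h1, h2]; exact hde m
      constructor
      · show (traj4 e lam (y, i) m).1 + dirG _ = _
        rw [hstep, h1]; rfl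
      · show e _ _ _ = _
        rw [hstep]; rfl

lemma cond_iff (e : Fin 4 → Fin 4 → Fin 3 → Fin 4)
    (hinj : ∀ (i : Fin 4) (ω : Fin 3), Function.Injective (fun j => e j i ω))
    (lam : ℤ × ℤ → Fin 3) (jj : ℕ → Fin 4) (i : Fin 4) (y : ℝ × ℝ) (d : ℕ → Fin 4)
    (hde : ∀ k, e (d k) (walkSt jj i k).2 (lam (walkSt jj i k).1) = jj k)
    (m : ℕ) :
    (∀ k < m, dirG ((traj4 e lam (y, i) (k + 1)).2.2) = dirG (jj k)) ↔
      (∀ k < m, digit4 (T4^[k] y.1) = d k) := by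
  induction m with
  | zero => simp
  | succ m ih =>
      constructor
      · intro h
        have hm : ∀ k < m, digit4 (T4^[k] y.1) = d k :=
          ih.mp (fun k hk => h k (hk.trans (Nat.lt_succ_self m)))
        intro k hk
        rcases Nat.lt_succ_iff_lt_or_eq.mp hk with hk' | rfl
        · exact hm k hk'
        · obtain ⟨h1, h2⟩ := traj_key e lam jj i y d hde k hm
          have h3 : dirG (e (digit4 ((traj4 e lam (y, i) k).2.1.1))
              (traj4 e lam (y, i) k).2.2 (lam (traj4 e lam (y, i) k).1)) = dirG (jj k) :=
            h k (Nat.lt_succ_self k)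
          have h4 := dirG_injective h3
          rw [traj4_fst1, h1, h2] at h4
          have h5 := hde k
          exact hinj _ _ (h4.trans h5.symm)
      · intro h k hk
        have hk' : ∀ k' < k, digit4 (T4^[k'] y.1) = d k' :=
          fun k' hkk => h k' (hkk.trans hk)
        obtain ⟨h1, h2⟩ := traj_key e lam jj i y d hde k hk'
        show dirG (e (digit4 ((traj4 e lam (y, i) k).2.1.1))
            (traj4 e lam (y, i) k).2.2 (lam (traj4 e lam (y, i) k).1)) = dirG (jj k)
        rw [traj4_fst1, h1, h2, h k hk, hde k]
lemma digit4_eq_iff {t : ℝ} (ht : t ∈ Set.Ico (0:ℝ) 1) (a : Fin 4) :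
    digit4 t = a ↔ ⌊(4 : ℝ) * t⌋ = (a : ℕ) := by
  obtain ⟨ht0, ht1⟩ := ht
  have h0 : (0 : ℤ) ≤ ⌊(4 : ℝ) * t⌋ := Int.floor_nonneg.mpr (by linarith)
  have h4 : ⌊(4 : ℝ) * t⌋ < 4 := by
    have h : (4 : ℝ) * t < 4 := by linarith
    exact Int.floor_lt.mpr (by norm_num; linarith)
  have hlt : (⌊(4 : ℝ) * t⌋).toNat < 4 := by omega
  rw [digit4, Fin.ext_iff]
  simp only [Nat.mod_eq_of_lt hlt]
  omega

lemma T4_eq {t : ℝ} {a : ℕ} (h : ⌊(4 : ℝ) * t⌋ = (a : ℤ)) : T4 t = 4 * t - a := by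
  rw [T4, Int.fract, h]
  norm_num

lemma digitSet_eq (n : ℕ) : ∀ f : ℕ → Fin 4, ∃ c : ℕ, c + 1 ≤ 4 ^ n ∧
    {t : ℝ | t ∈ Set.Ico (0:ℝ) 1 ∧ ∀ k < n, digit4 (T4^[k] t) = f k} =
      Set.Ico ((c : ℝ) / 4 ^ n) (((c : ℝ) + 1) / 4 ^ n) := by
  induction n with
  | zero =>
      intro f
      exact ⟨0, le_refl _, by ext t; simp [Set.mem_Ico]⟩
  | succ n ih =>
      intro f
      obtain ⟨c, hc, hset⟩ := ih (fun k => f (k + 1))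
      set a : ℕ := (f 0 : ℕ) with ha
      have ha3 : a ≤ 3 := Nat.lt_succ_iff.mp (f 0).isLt
      have h4n : (0:ℝ) < 4 ^ n := by positivity
      have hcr : (c : ℝ) + 1 ≤ 4 ^ n := by exact_mod_cast hc
      have ha3' : (a : ℝ) ≤ 3 := by exact_mod_cast ha3
      refine ⟨a * 4 ^ n + c, by rw [pow_succ]; nlinarith [hc, ha3], ?_⟩
      ext t
      simp only [Set.mem_setOf_eq, Set.mem_Ico, pow_succ]
      push_cast
      constructor
      · rintro ⟨ht, hdig⟩
        have h0 := (digit4_eq_iff ht (f 0)).mp (hdig 0 (Nat.succ_pos n))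
        have hT : T4 t = 4 * t - a := T4_eq (by exact_mod_cast h0)
        have hfl : (a : ℝ) ≤ 4 * t ∧ 4 * t < a + 1 := by
          constructor
          · have h := Int.floor_le ((4:ℝ) * t); rw [h0] at h; exact_mod_cast h
          · have h := Int.lt_floor_add_one ((4:ℝ) * t); rw [h0] at h; exact_mod_cast h
        have hTmem : T4 t ∈ Set.Ico ((c : ℝ) / 4 ^ n) (((c : ℝ) + 1) / 4 ^ n) := by
          rw [← hset]
          refine ⟨⟨by rw [hT]; linarith [hfl.1], by rw [hT]; linarith [hfl.2]⟩, ?_⟩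
          intro k hk
          have h := hdig (k + 1) (Nat.succ_lt_succ hk)
          rwa [Function.iterate_succ_apply] at h
        rw [hT, Set.mem_Ico, div_le_iff₀ h4n, ← sub_nonneg] at hTmem
        obtain ⟨hl, hr⟩ := hTmem
        rw [lt_div_iff₀ h4n] at hr
        constructor
        · rw [div_le_iff₀ (by positivity)]; nlinarith
        · rw [lt_div_iff₀ (by positivity)]; nlinarith
      · rintro ⟨hl, hr⟩
        rw [div_le_iff₀ (by positivity)] at hl
        rw [lt_div_iff₀ (by positivity)] at hr
        have ht : t ∈ Set.Ico (0:ℝ) 1 := by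
          constructor
          · nlinarith
          · nlinarith
        have hfl : ⌊(4:ℝ) * t⌋ = (a : ℤ) := by
          rw [Int.floor_eq_iff]
          constructor
          · push_cast; nlinarith
          · push_cast; nlinarith
        have hT : T4 t = 4 * t - a := T4_eq hfl
        have hTmem : T4 t ∈
            {t : ℝ | t ∈ Set.Ico (0:ℝ) 1 ∧ ∀ k < n, digit4 (T4^[k] t) = f (k + 1)} := by
          rw [hset, Set.mem_Ico, hT]
          constructor
          · rw [div_le_iff₀ h4n]; nlinarith
          · rw [lt_div_iff₀ h4n]; nlinarith
        refine ⟨ht, ?_⟩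
        intro k hk
        cases k with
        | zero => exact (digit4_eq_iff ht (f 0)).mpr (by exact_mod_cast hfl)
        | succ k =>
            rw [Function.iterate_succ_apply]
            exact hTmem.2 k (Nat.lt_of_succ_lt_succ hk)

/-- The measure `μ₁`: product of Lebesgue measure on `[0,1)²` and the uniform
probability measure on the four incoming directions. -/
noncomputable def muOne : Measure ((ℝ × ℝ) × Fin 4) :=
  (volume.restrict (Set.Ico (0:ℝ) 1 ×ˢ Set.Ico (0:ℝ) 1)).prod
    ((4 : ℝ≥0∞)⁻¹ • Measure.count)

/-- **toy model mimicking the standard random walk: path probabilities.**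
If for every incoming direction `i` and state `ω` the map `j ↦ e(j,i,ω)` is a bijection
onto `G`, then in every environment `lam`, for every `n ≥ 1` and every word
`(w₁, …, w_n) ∈ Gⁿ`, the set of initial conditions whose first `n` steps are
`w₁, …, w_n` has `μ₁`-measure `4^{-n}`. -/
theorem stmt6 (e : Fin 4 → Fin 4 → Fin 3 → Fin 4)
    (he : ∀ (i : Fin 4) (ω : Fin 3), Function.Bijective (fun j => e j i ω))
    (lam : (ℤ × ℤ) → Fin 3) (n : ℕ) (hn : 1 ≤ n)
    (w : Fin n → ℤ × ℤ) (hw : ∀ k, w k ∈ Set.range dirG) :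
    muOne {x : (ℝ × ℝ) × Fin 4 |
        ∀ k : Fin n, dirG (traj4 e lam x ((k : ℕ) + 1)).2.2 = w k} =
      (4 : ℝ≥0∞)⁻¹ ^ n := by
  classical
  choose j' hj' using fun k : Fin n => hw k
  set jj : ℕ → Fin 4 := fun k => if h : k < n then j' ⟨k, h⟩ else 0 with hjj
  choose einv heinv using fun (i : Fin 4) (ω : Fin 3) (a : Fin 4) => (he i ω).2 a
  set d : Fin 4 → ℕ → Fin 4 := fun i k =>
    einv (walkSt jj i k).2 (lam (walkSt jj i k).1) (jj k) with hd
  have hde : ∀ (i : Fin 4) (k : ℕ),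
      e (d i k) (walkSt jj i k).2 (lam (walkSt jj i k).1) = jj k :=
    fun i k => heinv _ _ _
  have hinj : ∀ (i : Fin 4) (ω : Fin 3), Function.Injective (fun j => e j i ω) :=
    fun i ω => (he i ω).1
  have hSet : ∀ (y : ℝ × ℝ) (i : Fin 4),
      (∀ k : Fin n, dirG (traj4 e lam (y, i) ((k : ℕ) + 1)).2.2 = w k) ↔
      (∀ k < n, digit4 (T4^[k] y.1) = d i k) := by
    intro y i
    rw [← cond_iff e hinj lam jj i y (d i) (hde i) n]
    constructor
    · intro h k hk
      have hjk : jj k = j' ⟨k, hk⟩ := by rw [hjj]; exact dif_pos hk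
      rw [hjk, hj' ⟨k, hk⟩]
      exact h ⟨k, hk⟩
    · intro h k
      have hjk : jj (k : ℕ) = j' k := by
        rw [hjj]; simp only [k.isLt, dif_pos]
      have := h (k : ℕ) k.isLt
      rw [this, hjk, hj' k]
  choose c hc1 hc2 using fun i : Fin 4 => digitSet_eq n (d i)
  -- the event intersected with the unit square
  have hST : {x : (ℝ × ℝ) × Fin 4 |
        ∀ k : Fin n, dirG (traj4 e lam x ((k : ℕ) + 1)).2.2 = w k} ∩
      ((Set.Ico (0:ℝ) 1 ×ˢ Set.Ico (0:ℝ) 1) ×ˢ (Set.univ : Set (Fin 4))) =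
      ⋃ i : Fin 4, (Set.Ico ((c i : ℝ) / 4 ^ n) (((c i : ℝ) + 1) / 4 ^ n) ×ˢ
        Set.Ico (0:ℝ) 1) ×ˢ ({i} : Set (Fin 4)) := by
    ext ⟨⟨t, u⟩, i⟩
    simp only [Set.mem_inter_iff, Set.mem_setOf_eq, Set.mem_prod, Set.mem_univ, and_true,
      Set.mem_iUnion, Set.mem_singleton_iff, Set.mem_Ico]
    constructor
    · rintro ⟨hcond, ht, hu⟩
      refine ⟨i, ⟨?_, hu⟩, rfl⟩
      have hmem : t ∈ Set.Ico ((c i : ℝ) / 4 ^ n) (((c i : ℝ) + 1) / 4 ^ n) := by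
        rw [← hc2 i]
        exact ⟨ht, (hSet (t, u) i).mp hcond⟩
      exact hmem
    · rintro ⟨i', htu, rfl⟩
      have hmem : t ∈ {s : ℝ | s ∈ Set.Ico (0:ℝ) 1 ∧
          ∀ k < n, digit4 (T4^[k] s) = d i k} := by
        rw [hc2 i]; exact Set.mem_Ico.mpr htu.1
      exact ⟨(hSet (t, u) i).mpr hmem.2, hmem.1, htu.2⟩
  -- measure computation
  have hms : MeasurableSet ((Set.Ico (0:ℝ) 1 ×ˢ Set.Ico (0:ℝ) 1) ×ˢ
      (Set.univ : Set (Fin 4))) :=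
    (measurableSet_Ico.prod measurableSet_Ico).prod MeasurableSet.univ
  have hmeas : ∀ i : Fin 4, MeasurableSet
      ((Set.Ico ((c i : ℝ) / 4 ^ n) (((c i : ℝ) + 1) / 4 ^ n) ×ˢ
        Set.Ico (0:ℝ) 1) ×ˢ ({i} : Set (Fin 4))) :=
    fun i => (measurableSet_Ico.prod measurableSet_Ico).prod (measurableSet_singleton i)
  have hdisj : Pairwise (Function.onFun Disjoint fun i : Fin 4 =>
      (Set.Ico ((c i : ℝ) / 4 ^ n) (((c i : ℝ) + 1) / 4 ^ n) ×ˢ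
        Set.Ico (0:ℝ) 1) ×ˢ ({i} : Set (Fin 4))) := by
    intro i i' hii'
    refine Set.disjoint_left.mpr ?_
    rintro x hx hx'
    exact hii' (hx.2.symm.trans hx'.2)
  rw [muOne, Measure.restrict_prod_eq_prod_univ, Measure.restrict_apply' hms, hST,
    measure_iUnion hdisj hmeas]
  have hterm : ∀ i : Fin 4,
      (volume.prod ((4 : ℝ≥0∞)⁻¹ • Measure.count))
        ((Set.Ico ((c i : ℝ) / 4 ^ n) (((c i : ℝ) + 1) / 4 ^ n) ×ˢ
          Set.Ico (0:ℝ) 1) ×ˢ ({i} : Set (Fin 4))) =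
        (4 : ℝ≥0∞)⁻¹ ^ n * (4 : ℝ≥0∞)⁻¹ := by
    intro i
    rw [Measure.prod_prod, Measure.volume_eq_prod, Measure.prod_prod,
      Real.volume_Ico, Real.volume_Ico]
    have hba : ((c i : ℝ) + 1) / 4 ^ n - (c i : ℝ) / 4 ^ n = ((4 : ℝ)⁻¹) ^ n := by
      rw [div_sub_div_same, add_sub_cancel_left, one_div, inv_pow]
    rw [hba]
    have h1 : ENNReal.ofReal ((1:ℝ) - 0) = 1 := by norm_num
    have h2 : ENNReal.ofReal (((4 : ℝ)⁻¹) ^ n) = (4 : ℝ≥0∞)⁻¹ ^ n := by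
      rw [ENNReal.ofReal_pow (by norm_num)]
      congr 1
      rw [ENNReal.ofReal_inv_of_pos (by norm_num)]
      norm_num
    rw [h1, h2, mul_one, Measure.smul_apply, Measure.count_singleton, smul_eq_mul, mul_one]
  simp only [hterm]
  rw [tsum_fintype, Finset.sum_const, Finset.card_univ, Fintype.card_fin, nsmul_eq_mul]
  rw [mul_comm ((4 : ℝ≥0∞)⁻¹ ^ n), ← mul_assoc]
  norm_num
  rw [ENNReal.mul_inv_cancel (by norm_num) (by norm_num), one_mul]
end

section
/- (Toy model mimicking the standard random walk: recurrence in every fiber.) Let G = {g₁, g₂, g₃, g₄} = {(1,0), (0,1), (−1,0), (0,−1)} ⊂ ℤ², let Ω = {1,2,3}, and let e : {0,1,2,3} × {1,2,3,4} × Ω → G be a function such that for every incoming index i ∈ {1,2,3,4} and every state ω ∈ Ω, the map j ↦ e(j, i, ω) is a bijection from {0,1,2,3} onto G. Let K₄ be the 4-baker's map on [0,1)². For λ ∈ Ω^{ℤ²} and x = (y,i) ∈ [0,1)² × {1,2,3,4}, define recursively γ₀ = 0, y₀ = y, i₀ = i, and for k ≥ 0: h_{k+1} = e(⌊4 (y_k)₁⌋,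 i_k, λ_{γ_k}), γ_{k+1} = γ_k + h_{k+1}, y_{k+1} = K₄(y_k), i_{k+1} = the index of h_{k+1}. Let μ₁ be the product of the uniform probability measure on {1,2,3,4} and Lebesgue measure on [0,1)². Then for every environment λ ∈ Ω^{ℤ²}, for μ₁-almost every x, the position γ_n(x, λ) equals (0,0) for infinitely many n. -/
/-!
Reading `y₁` in base 4 turns Lebesgue measure on `[0, 1)` into the uniform Bernoulli measure on
digit sequences, and `K₄` shifts these digits, so `⌊4 (y_k)₁⌋` is the `k`-th digit of `y₁`. The
exit `h_{k+1}` is obtained from that digit by a bijection depending only on the digits read before,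
so the exits are again i.i.d. uniform on `G`, whatever the environment: `γ_n` is the simple random
walk on `ℤ²`. Rotating by 45° splits it into two independent `±1` walks, so
`P(γ_{2n} = 0) = C(2n, n)² / 16ⁿ ≥ 1 / (4n + 1)`, whose sum diverges; by the last-visit
decomposition this forces recurrence.
-/

open MeasureTheory ENNReal Filter

section Sequences

variable {α : Type*}

def seqTake (n : ℕ) (a : ℕ → α) : Fin n → α := fun k => a k

def seqDrop (n : ℕ) (a : ℕ → α) : ℕ → α := fun k => a (n + k)

def relabel (σ : (n : ℕ) → (Fin n → α) → Equiv.Perm α) (a : ℕ → α) : ℕ → α :=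
  fun n => σ n (seqTake n a) (a n)

lemma seqTake_zero_preimage (q : Fin 0 → α) : seqTake 0 ⁻¹' {q} = Set.univ :=
  Set.eq_univ_of_forall fun _ => Subsingleton.elim _ _

lemma seqTake_add_eq_append_iff {n m : ℕ} (a : ℕ → α) (q : Fin n → α) (r : Fin m → α) :
    seqTake (n + m) a = Fin.append q r ↔ seqTake n a = q ∧ seqTake m (seqDrop n a) = r := by
  simp only [funext_iff, Fin.forall_fin_add, Fin.append_left, Fin.append_right, seqTake, seqDrop,
    Fin.val_castAdd, Fin.val_natAdd]

lemma seqTake_succ_eq_snoc_iff {n : ℕ} (a : ℕ → α) (p : Fin n → α) (x : α) :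
    seqTake (n + 1) a = Fin.snoc p x ↔ seqTake n a = p ∧ a n = x := by
  simp [funext_iff, Fin.forall_fin_succ', seqTake]

lemma seqTake_succ_eq_cons_iff {n : ℕ} (a : ℕ → α) (x : α) (p : Fin n → α) :
    seqTake (n + 1) a = Fin.cons x p ↔ a 0 = x ∧ seqTake n (seqDrop 1 a) = p := by
  simp [funext_iff, Fin.forall_fin_succ, seqTake, seqDrop, add_comm]

lemma exists_relabel_preimage_seqTake (σ : (n : ℕ) → (Fin n → α) → Equiv.Perm α) :
    ∀ n (q : Fin n → α), ∃ p, relabel σ ⁻¹' (seqTake n ⁻¹' {q}) = seqTake n ⁻¹' {p}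
  | 0, q => ⟨q, by simp only [seqTake_zero_preimage, Set.preimage_univ]⟩
  | n + 1, q => by
    obtain ⟨p, hp⟩ := exists_relabel_preimage_seqTake σ n (Fin.init q)
    refine ⟨Fin.snoc p ((σ n p).symm (q (Fin.last n))), Set.ext fun a => ?_⟩
    have hpa : seqTake n (relabel σ a) = Fin.init q ↔ seqTake n a = p := Set.ext_iff.1 hp a
    rw [← Fin.snoc_init_self q]
    simp only [Set.mem_preimage, Set.mem_singleton_iff, seqTake_succ_eq_snoc_iff, hpa]
    rw [Fin.snoc_init_self q, Equiv.eq_symm_apply]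
    exact and_congr_right fun h => by rw [relabel, h]

variable [MeasurableSpace α]

@[fun_prop]
lemma measurable_seqTake (n : ℕ) : Measurable (seqTake (α := α) n) :=
  measurable_pi_lambda _ fun _ => measurable_pi_apply _

@[fun_prop]
lemma measurable_seqDrop (n : ℕ) : Measurable (seqDrop (α := α) n) :=
  measurable_pi_lambda _ fun _ => measurable_pi_apply _

def IsUniformBernoulli [Fintype α] (μ : Measure (ℕ → α)) : Prop :=
  ∀ n (q : Fin n → α), μ (seqTake n ⁻¹' {q}) = ((Fintype.card α : ℝ≥0∞) ^ n)⁻¹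

section Finite

variable [Finite α] [MeasurableSingletonClass α]

lemma measurableSet_seqTake_preimage {n : ℕ} (Q : Set (Fin n → α)) :
    MeasurableSet (seqTake n ⁻¹' Q) :=
  measurable_seqTake n Q.toFinite.measurableSet

lemma measurable_relabel (σ : (n : ℕ) → (Fin n → α) → Equiv.Perm α) : Measurable (relabel σ) :=
  measurable_pi_lambda _ fun n => (measurable_of_countable fun pq : (Fin n → α) × α =>
    σ n pq.1 pq.2).comp ((measurable_seqTake n).prodMk (measurable_pi_apply n))

theorem MeasureTheory.Measure.ext_of_seqTake_preimage {μ ν : Measure (ℕ → α)} [IsFiniteMeasure μ]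
    (h : ∀ n (q : Fin n → α), μ (seqTake n ⁻¹' {q}) = ν (seqTake n ⁻¹' {q})) : μ = ν := by
  have hmap : ∀ n, μ.map (seqTake n) = ν.map (seqTake n) := fun n =>
    Measure.ext_iff_singleton.2 fun q => by
      rw [Measure.map_apply (by fun_prop) (measurableSet_singleton q),
        Measure.map_apply (by fun_prop) (measurableSet_singleton q), h]
  have hprefix : ∀ n (Q : Set (Fin n → α)), μ (seqTake n ⁻¹' Q) = ν (seqTake n ⁻¹' Q) :=
    fun n Q => by
      rw [← Measure.map_apply (by fun_prop) Q.toFinite.measurableSet, hmap,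
        Measure.map_apply (by fun_prop) Q.toFinite.measurableSet]
  refine ext_of_generate_finite _ generateFrom_measurableCylinders.symm
    isPiSystem_measurableCylinders (fun s hs => ?_) (by simpa using hprefix 0 Set.univ)
  obtain ⟨I, S, -, rfl⟩ := (mem_measurableCylinders s).1 hs
  have hI : ∀ i ∈ I, i < I.sup id + 1 := fun i hi => Nat.lt_succ_of_le (Finset.le_sup (f := id) hi)
  exact hprefix (I.sup id + 1) {p | (fun i : I => p ⟨i, hI i i.2⟩) ∈ S}

end Finite

namespace IsUniformBernoulli

variable [Fintype α] {μ : Measure (ℕ → α)} (hμ : IsUniformBernoulli μ)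
include hμ

lemma isProbabilityMeasure : IsProbabilityMeasure μ :=
  ⟨by simpa [seqTake_zero_preimage] using hμ 0 Fin.elim0⟩

variable [MeasurableSingletonClass α]

lemma measure_seqTake_preimage_finset {n : ℕ} (F : Finset (Fin n → α)) :
    μ (seqTake n ⁻¹' F) = F.card * ((Fintype.card α : ℝ≥0∞) ^ n)⁻¹ := by
  have hmap : μ.map (seqTake n) = ((Fintype.card α : ℝ≥0∞) ^ n)⁻¹ • Measure.count :=
    Measure.ext_iff_singleton.2 fun q => by
      rw [Measure.map_apply (by fun_prop) (measurableSet_singleton q), hμ, Measure.smul_apply,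
        Measure.count_singleton, smul_eq_mul, mul_one]
  rw [← Measure.map_apply (by fun_prop) F.finite_toSet.measurableSet, hmap, Measure.smul_apply,
    Measure.count_apply_finset, smul_eq_mul, mul_comm]

lemma measure_seqTake_singleton_inter_seqDrop {n : ℕ} (q : Fin n → α) {S : Set (ℕ → α)}
    (hS : MeasurableSet S) :
    μ (seqTake n ⁻¹' {q} ∩ seqDrop n ⁻¹' S) = μ (seqTake n ⁻¹' {q}) * μ S := by
  have := hμ.isProbabilityMeasure
  have hcyl : ∀ m (r : Fin m → α), seqDrop n ⁻¹' (seqTake m ⁻¹' {r}) ∩ seqTake n ⁻¹' {q} =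
      seqTake (n + m) ⁻¹' {Fin.append q r} := fun m r => by
    ext a
    simp [seqTake_add_eq_append_iff, and_comm]
  have hshift : (μ.restrict (seqTake n ⁻¹' {q})).map (seqDrop n) =
      ((Fintype.card α : ℝ≥0∞) ^ n)⁻¹ • μ := by
    refine Measure.ext_of_seqTake_preimage fun m r => ?_
    rw [Measure.map_apply (by fun_prop) (measurableSet_seqTake_preimage _),
      Measure.restrict_apply (measurable_seqDrop n (measurableSet_seqTake_preimage _)), hcyl,
      Measure.smul_apply, hμ, hμ, smul_eq_mul, pow_add,
      ENNReal.mul_inv (Or.inr (by simp)) (Or.inl (by simp))]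
  have := congr($hshift S)
  rwa [Measure.map_apply (by fun_prop) hS, Measure.restrict_apply (measurable_seqDrop n hS),
    Measure.smul_apply, smul_eq_mul, ← hμ n q, Set.inter_comm] at this

theorem measure_seqTake_preimage_inter_seqDrop {n : ℕ} (Q : Set (Fin n → α))
    {S : Set (ℕ → α)} (hS : MeasurableSet S) :
    μ (seqTake n ⁻¹' Q ∩ seqDrop n ⁻¹' S) = μ (seqTake n ⁻¹' Q) * μ S := by
  have hsplit : (μ.restrict (seqDrop n ⁻¹' S)).map (seqTake n) = μ S • μ.map (seqTake n) :=
    Measure.ext_iff_singleton.2 fun q => by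
      rw [Measure.map_apply (by fun_prop) (measurableSet_singleton q),
        Measure.restrict_apply (measurableSet_seqTake_preimage _),
        hμ.measure_seqTake_singleton_inter_seqDrop q hS, Measure.smul_apply,
        Measure.map_apply (by fun_prop) (measurableSet_singleton q), smul_eq_mul, mul_comm]
  have := congr($hsplit Q)
  rwa [Measure.map_apply (by fun_prop) Q.toFinite.measurableSet,
    Measure.restrict_apply (measurableSet_seqTake_preimage _), Measure.smul_apply,
    Measure.map_apply (by fun_prop) Q.toFinite.measurableSet, smul_eq_mul, mul_comm] at this

theorem map_relabel (σ : (n : ℕ) → (Fin n → α) → Equiv.Perm α) :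
    IsUniformBernoulli (μ.map (relabel σ)) := fun n q => by
  obtain ⟨p, hp⟩ := exists_relabel_preimage_seqTake σ n q
  rw [Measure.map_apply (measurable_relabel σ) (measurableSet_seqTake_preimage _), hp, hμ]

end IsUniformBernoulli

end Sequences

section Walks

variable {α G : Type*} [AddCommGroup G]

def walk (v : α → G) (a : ℕ → α) (n : ℕ) : G := ∑ k ∈ Finset.range n, v (a k)

lemma walk_eq_sum_seqTake (v : α → G) (a : ℕ → α) (n : ℕ) :
    walk v a n = ∑ k, v (seqTake n a k) :=
  (Fin.sum_univ_eq_sum_range (fun k => v (a k)) n).symm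

lemma walk_seqDrop (v : α → G) (a : ℕ → α) (m n : ℕ) :
    walk v (seqDrop m a) n = walk v a (m + n) - walk v a m := by
  simp [walk, seqDrop, Finset.sum_range_add]

def returnSet (v : α → G) : Set (ℕ → α) := {a | ∃ n, walk v a (n + 1) = 0}

lemma seqDrop_mem_returnSet {v : α → G} {a : ℕ → α} {m k : ℕ} (hm : walk v a m = 0)
    (hk : walk v a (m + k + 1) = 0) : seqDrop m a ∈ returnSet v :=
  ⟨k, by rw [walk_seqDrop, ← add_assoc, hk, hm, sub_zero]⟩

lemma exists_walk_eq_zero_and_seqDrop_notMem_returnSet {v : α → G} {a : ℕ → α}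
    (h : ¬∃ᶠ n in atTop, walk v a n = 0) :
    ∃ m, walk v a m = 0 ∧ seqDrop m a ∉ returnSet v := by
  classical
  obtain ⟨N, hN⟩ := eventually_atTop.1 (not_frequently.1 h)
  have h0 : walk v a 0 = 0 := Finset.sum_range_zero _
  set m := Nat.findGreatest (fun n => walk v a n = 0) N
  have hm : walk v a m = 0 :=
    Nat.findGreatest_spec (P := fun n => walk v a n = 0) (Nat.zero_le N) h0
  refine ⟨m, hm, fun ⟨k, hk⟩ => ?_⟩
  rw [walk_seqDrop, hm, sub_zero, ← add_assoc] at hk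
  by_cases hle : m + k + 1 ≤ N
  · exact Nat.findGreatest_is_greatest (P := fun n => walk v a n = 0) (by omega) hle hk
  · exact hN _ (by omega) hk

lemma setOf_walk_eq_zero (v : α → G) (n : ℕ) :
    {a | walk v a n = 0} = seqTake n ⁻¹' {p | ∑ k, v (p k) = 0} := by
  ext a
  simp [walk_eq_sum_seqTake]

variable [Fintype α] [MeasurableSpace α] [MeasurableSingletonClass α]

lemma measurableSet_returnSet (v : α → G) : MeasurableSet (returnSet v) := by
  have : returnSet v = ⋃ n, {a | walk v a (n + 1) = 0} := by ext; simp [returnSet]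
  rw [this]
  exact .iUnion fun n => setOf_walk_eq_zero v (n + 1) ▸ measurableSet_seqTake_preimage _

/-- The events "`0` is visited at time `m` and never again" are disjoint and have probability
`P(S_m = 0) * P(no return)`, so `P(no return) = 0`; a walk visiting `0` only finitely often lies
in one of them. -/
theorem IsUniformBernoulli.frequently_walk_eq_zero {μ : Measure (ℕ → α)}
    (hμ : IsUniformBernoulli μ) (v : α → G) (hdiv : ∑' n, μ {a | walk v a n = 0} = ∞) :
    ∀ᵐ a ∂μ, ∃ᶠ n in atTop, walk v a n = 0 := by
  have := hμ.isProbabilityMeasure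
  set E : ℕ → Set (ℕ → α) := fun m => {a | walk v a m = 0} ∩ seqDrop m ⁻¹' (returnSet v)ᶜ
  have hE : ∀ m, μ (E m) = μ {a | walk v a m = 0} * μ (returnSet v)ᶜ := fun m => by
    simp only [E, setOf_walk_eq_zero]
    exact hμ.measure_seqTake_preimage_inter_seqDrop _ (measurableSet_returnSet v).compl
  have hEmeas : ∀ m, MeasurableSet (E m) := fun m =>
    (setOf_walk_eq_zero v m ▸ measurableSet_seqTake_preimage _).inter
      (measurable_seqDrop m (measurableSet_returnSet v).compl)
  have hEdisj : Pairwise (Function.onFun Disjoint E) := (pairwise_disjoint_on E).2 fun m m' hlt =>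
    Set.disjoint_left.2 fun a ⟨hm, _⟩ ⟨hm', _⟩ => by
      obtain ⟨k, rfl⟩ := Nat.exists_eq_add_of_lt hlt
      exact ‹seqDrop m a ∈ (returnSet v)ᶜ› (seqDrop_mem_returnSet hm hm')
  have hnoreturn : μ (returnSet v)ᶜ = 0 := by
    have hle : (∑' m, μ {a | walk v a m = 0}) * μ (returnSet v)ᶜ ≤ 1 := by
      rw [← ENNReal.tsum_mul_right, ← tsum_congr hE, ← measure_iUnion hEdisj hEmeas]
      exact prob_le_one
    rw [hdiv] at hle
    by_contra hne
    rw [ENNReal.top_mul hne] at hle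
    exact absurd hle (by simp)
  rw [ae_iff]
  refine measure_mono_null (fun a ha => Set.mem_iUnion.2 ?_)
    (measure_iUnion_null (s := E) fun m => by rw [hE, hnoreturn, mul_zero])
  exact exists_walk_eq_zero_and_seqDrop_notMem_returnSet ha

end Walks

section SimpleRandomWalk

open Finset

/-- Under the rotation `(x, y) ↦ (x + y, x - y)` the four steps become the four pairs of signs. -/
def signDir : Bool → Bool → Fin 4
  | true, true => 0
  | true, false => 1
  | false, false => 2
  | false, true => 3

lemma signDir_injective : Function.Injective2 signDir := by
  unfold Function.Injective2
  decide

lemma dirG_signDir (a b : Bool) :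
    (dirG (signDir a b)).1 + (dirG (signDir a b)).2 = (if a then 1 else -1) ∧
      (dirG (signDir a b)).1 - (dirG (signDir a b)).2 = (if b then 1 else -1) := by
  cases a <;> cases b <;> decide

lemma sum_ite_mem_one_neg_one {ι : Type*} [Fintype ι] [DecidableEq ι] (A : Finset ι) :
    ∑ k, (if k ∈ A then (1 : ℤ) else -1) = 2 * #A - Fintype.card ι := by
  have h : ∀ k, (if k ∈ A then (1 : ℤ) else -1) = 2 * (if k ∈ A then 1 else 0) - 1 := fun k => by
    split_ifs <;> norm_num
  simp [h, Finset.sum_sub_distrib, mul_comm]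

def balancedPaths (n : ℕ) : Finset (Fin (2 * n) → Fin 4) :=
  (powersetCard n univ ×ˢ powersetCard n univ).image fun AB k => signDir (k ∈ AB.1) (k ∈ AB.2)

lemma card_balancedPaths (n : ℕ) : #(balancedPaths n) = n.centralBinom ^ 2 := by
  rw [balancedPaths, card_image_of_injective, card_product, card_powersetCard, card_univ,
    Fintype.card_fin, ← Nat.centralBinom_eq_two_mul_choose, sq]
  intro AB AB' h
  have := fun k => signDir_injective (congrFun h k)
  exact Prod.ext (Finset.ext fun k => by simpa using (this k).1)
    (Finset.ext fun k => by simpa using (this k).2)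

lemma sum_dirG_eq_zero_of_mem_balancedPaths {n : ℕ} {p : Fin (2 * n) → Fin 4}
    (hp : p ∈ balancedPaths n) : ∑ k, dirG (p k) = 0 := by
  obtain ⟨⟨A, B⟩, hAB, rfl⟩ := mem_image.1 hp
  simp only [mem_product, mem_powersetCard, subset_univ, true_and] at hAB
  have hu := sum_ite_mem_one_neg_one A
  have hv := sum_ite_mem_one_neg_one B
  simp only [hAB.1, hAB.2, Fintype.card_fin] at hu hv
  set W := ∑ k, dirG (signDir (decide (k ∈ A)) (decide (k ∈ B)))
  have hsum : W.1 + W.2 = 0 := by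
    rw [Prod.fst_sum, Prod.snd_sum, ← sum_add_distrib]
    simp only [(dirG_signDir _ _).1, decide_eq_true_eq, hu]
    push_cast; ring
  have hdiff : W.1 - W.2 = 0 := by
    rw [Prod.fst_sum, Prod.snd_sum, ← sum_sub_distrib]
    simp only [(dirG_signDir _ _).2, decide_eq_true_eq, hv]
    push_cast; ring
  exact Prod.ext (by simp only [Prod.fst_zero]; omega) (by simp only [Prod.snd_zero]; omega)

lemma sixteen_pow_le_mul_centralBinom_sq (n : ℕ) : 16 ^ n ≤ (4 * n + 1) * n.centralBinom ^ 2 := by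
  induction n with
  | zero => simp
  | succ n ih =>
    have hrec := Nat.succ_mul_centralBinom_succ n
    have key : 16 * (4 * n + 1) * (n + 1) ^ 2 ≤ 4 * (4 * n + 5) * (2 * n + 1) ^ 2 := by nlinarith
    have : (n + 1) ^ 2 * 16 ^ (n + 1) ≤
        (n + 1) ^ 2 * ((4 * (n + 1) + 1) * (n + 1).centralBinom ^ 2) :=
      calc (n + 1) ^ 2 * 16 ^ (n + 1) = 16 * (n + 1) ^ 2 * 16 ^ n := by ring
        _ ≤ 16 * (n + 1) ^ 2 * ((4 * n + 1) * n.centralBinom ^ 2) := by gcongr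
        _ = 16 * (4 * n + 1) * (n + 1) ^ 2 * n.centralBinom ^ 2 := by ring
        _ ≤ 4 * (4 * n + 5) * (2 * n + 1) ^ 2 * n.centralBinom ^ 2 := by gcongr
        _ = (4 * (n + 1) + 1) * ((n + 1) * (n + 1).centralBinom) ^ 2 := by rw [hrec]; ring
        _ = _ := by ring
    exact Nat.le_of_mul_le_mul_left this (by positivity)

lemma tsum_inv_four_mul_add_one : ∑' n : ℕ, (4 * (n : ℝ≥0∞) + 1)⁻¹ = ∞ := by
  by_contra h
  refine Real.not_summable_natCast_inv <| (summable_nat_add_iff 1).1 <|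
    ((ENNReal.summable_toReal h).mul_left 4).of_nonneg_of_le (fun n => by positivity) fun n => ?_
  have hcast : (4 * (n : ℝ≥0∞) + 1).toReal = 4 * n + 1 := by
    rw [show 4 * (n : ℝ≥0∞) + 1 = ((4 * n + 1 : ℕ) : ℝ≥0∞) by push_cast; rfl,
      ENNReal.toReal_natCast]
    push_cast; rfl
  rw [ENNReal.toReal_inv, hcast, Nat.cast_add, Nat.cast_one, inv_eq_one_div, ← div_eq_mul_inv,
    div_le_div_iff₀ (by positivity) (by positivity)]
  linarith

theorem IsUniformBernoulli.tsum_measure_walk_dirG_eq_zero {μ : Measure (ℕ → Fin 4)}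
    (hμ : IsUniformBernoulli μ) : ∑' n, μ {a | walk dirG a n = 0} = ∞ := by
  have hlow : ∀ n : ℕ, (4 * (n : ℝ≥0∞) + 1)⁻¹ ≤ μ {a | walk dirG a (2 * n) = 0} := fun n =>
    calc (4 * (n : ℝ≥0∞) + 1)⁻¹ ≤ (n.centralBinom ^ 2 : ℕ) * ((4 : ℝ≥0∞) ^ (2 * n))⁻¹ := by
          rw [← div_eq_mul_inv, ENNReal.le_div_iff_mul_le (Or.inl (by positivity))
            (Or.inl (by simp)), ENNReal.inv_mul_le_iff (by positivity)
            (by simp [ENNReal.mul_eq_top]), pow_mul]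
          exact_mod_cast sixteen_pow_le_mul_centralBinom_sq n
      _ = μ (seqTake (2 * n) ⁻¹' balancedPaths n) := by
          rw [hμ.measure_seqTake_preimage_finset, card_balancedPaths, Fintype.card_fin]
          norm_cast
      _ ≤ μ {a | walk dirG a (2 * n) = 0} := by
          rw [setOf_walk_eq_zero]
          exact measure_mono fun a ha => sum_dirG_eq_zero_of_mem_balancedPaths ha
  refine top_le_iff.1 ?_
  calc ∞ = ∑' n : ℕ, (4 * (n : ℝ≥0∞) + 1)⁻¹ := tsum_inv_four_mul_add_one.symm
    _ ≤ ∑' n, μ {a | walk dirG a (2 * n) = 0} := ENNReal.tsum_le_tsum hlow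
    _ ≤ ∑' n, μ {a | walk dirG a n = 0} :=
        ENNReal.tsum_comp_le_tsum_of_injective (fun _ _ h => by omega) _

theorem IsUniformBernoulli.frequently_walk_dirG_eq_zero {μ : Measure (ℕ → Fin 4)}
    (hμ : IsUniformBernoulli μ) : ∀ᵐ a ∂μ, ∃ᶠ n in atTop, walk dirG a n = 0 :=
  hμ.frequently_walk_eq_zero dirG hμ.tsum_measure_walk_dirG_eq_zero

end SimpleRandomWalk

section Digits

noncomputable def fract4 (z : ℝ) : ℝ := Int.fract (4 * z)

noncomputable def digitSeq (z : ℝ) : ℕ → Fin 4 := fun n => digit4 (fract4^[n] z)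

lemma mem_Ico_and_digit4_eq_iff (z : ℝ) (a : Fin 4) :
    (z ∈ Set.Ico 0 1 ∧ digit4 z = a) ↔ ⌊4 * z⌋ = (a : ℕ) := by
  have ha := a.isLt
  constructor
  · rintro ⟨⟨h0, h1⟩, rfl⟩
    have : 0 ≤ ⌊4 * z⌋ := Int.floor_nonneg.2 (by linarith)
    have : ⌊4 * z⌋ < 4 := Int.floor_lt.2 (by push_cast; linarith)
    simp only [digit4]
    omega
  · intro h
    have h' := Int.floor_eq_iff.1 h
    push_cast at h'
    have ha' : ((a : ℕ) : ℝ) ≤ 3 := by exact_mod_cast Nat.le_of_lt_succ ha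
    refine ⟨⟨by linarith, by linarith⟩, ?_⟩
    ext
    simp only [digit4, h, Int.toNat_natCast]
    omega

lemma setOf_digit4_eq_and_fract4_mem_Ico (a : Fin 4) {l r : ℝ} (hl : 0 ≤ l) (hr : r ≤ 1) :
    {z | z ∈ Set.Ico 0 1 ∧ digit4 z = a ∧ fract4 z ∈ Set.Ico l r} =
      Set.Ico ((a + l) / 4) ((a + r) / 4) := by
  ext z
  rw [Set.mem_ofPred_eq, ← and_assoc, mem_Ico_and_digit4_eq_iff, Set.mem_Ico, Set.mem_Ico]
  constructor
  · rintro ⟨hfl, h1, h2⟩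
    rw [fract4, Int.fract, hfl] at h1 h2
    push_cast at h1 h2
    constructor <;> linarith
  · rintro ⟨h1, h2⟩
    have hfl : ⌊4 * z⌋ = (a : ℕ) :=
      Int.floor_eq_iff.2 ⟨by push_cast; linarith, by push_cast; linarith⟩
    rw [fract4, Int.fract, hfl]
    push_cast
    exact ⟨rfl, by linarith, by linarith⟩

lemma digitSeq_fract4 (z : ℝ) : digitSeq (fract4 z) = seqDrop 1 (digitSeq z) := by
  ext n
  simp [digitSeq, seqDrop, add_comm 1 n, Function.iterate_succ_apply]

lemma exists_Ico_eq_inter_digitSeq_preimage :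
    ∀ n (q : Fin n → Fin 4), ∃ l : ℝ, 0 ≤ l ∧ l + (4 ^ n)⁻¹ ≤ 1 ∧
      Set.Ico 0 1 ∩ digitSeq ⁻¹' (seqTake n ⁻¹' {q}) = Set.Ico l (l + (4 ^ n)⁻¹)
  | 0, q => ⟨0, le_rfl, by simp, by simp [seqTake_zero_preimage]⟩
  | n + 1, q => by
    obtain ⟨l, hl0, hl1, hl⟩ := exists_Ico_eq_inter_digitSeq_preimage n (Fin.tail q)
    have hq0 : ((q 0 : ℕ) : ℝ) ≤ 3 := by exact_mod_cast Nat.le_of_lt_succ (q 0).isLt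
    have hpow : ((4 : ℝ) ^ (n + 1))⁻¹ = (4 ^ n)⁻¹ / 4 := by rw [pow_succ, mul_inv, div_eq_mul_inv]
    have hset : Set.Ico 0 1 ∩ digitSeq ⁻¹' (seqTake (n + 1) ⁻¹' {q}) =
        {z | z ∈ Set.Ico 0 1 ∧ digit4 z = q 0 ∧ fract4 z ∈ Set.Ico l (l + (4 ^ n)⁻¹)} := by
      rw [← hl]
      ext z
      have hcons := seqTake_succ_eq_cons_iff (digitSeq z) (q 0) (Fin.tail q)
      rw [Fin.cons_self_tail, ← digitSeq_fract4] at hcons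
      have hfract : fract4 z ∈ Set.Ico 0 1 := ⟨Int.fract_nonneg _, Int.fract_lt_one _⟩
      simp only [Set.mem_inter_iff, Set.mem_preimage, Set.mem_singleton_iff, Set.mem_ofPred_eq,
        hcons, hfract, true_and]
      rfl
    refine ⟨(q 0 + l) / 4, by positivity, by rw [hpow]; linarith, ?_⟩
    rw [hset, setOf_digit4_eq_and_fract4_mem_Ico _ hl0 hl1, hpow]
    ring_nf

@[fun_prop]
lemma measurable_fract4 : Measurable fract4 :=
  measurable_fract.comp (measurable_const_mul 4)

@[fun_prop]
lemma measurable_digit4 : Measurable digit4 :=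
  (measurable_of_countable fun i : ℤ => (⟨i.toNat % 4, Nat.mod_lt _ (by norm_num)⟩ : Fin 4)).comp
    (Int.measurable_floor.comp (measurable_const_mul 4))

@[fun_prop]
lemma measurable_digitSeq : Measurable digitSeq :=
  measurable_pi_lambda _ fun n => measurable_digit4.comp (measurable_fract4.iterate n)

theorem isUniformBernoulli_digitSeq :
    IsUniformBernoulli ((volume.restrict (Set.Ico (0 : ℝ) 1)).map digitSeq) := fun n q => by
  obtain ⟨l, -, -, hl⟩ := exists_Ico_eq_inter_digitSeq_preimage n q
  rw [Measure.map_apply measurable_digitSeq (measurableSet_seqTake_preimage _),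
    Measure.restrict_apply (measurable_digitSeq (measurableSet_seqTake_preimage _)),
    Set.inter_comm, hl, Real.volume_Ico, add_sub_cancel_left, Fintype.card_fin,
    ENNReal.ofReal_inv_of_pos (by positivity), ENNReal.ofReal_pow (by norm_num)]
  norm_num

end Digits

section ToyModel

variable (e : Fin 4 → Fin 4 → Fin 3 → Fin 4) (lam : ℤ × ℤ → Fin 3) (i : Fin 4)

/-- The position and incoming direction `(γ_n, i_n)` once the first `n` base-4 digits `p` of
`y₁` have been read. -/
def walkState : (n : ℕ) → (Fin n → Fin 4) → (ℤ × ℤ) × Fin 4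
  | 0, _ => ((0, 0), i)
  | n + 1, p =>
    let s := walkState n (Fin.init p)
    let j := e (p (Fin.last n)) s.2 (lam s.1)
    (s.1 + dirG j, j)

noncomputable def exitPerm (he : ∀ i ω, Function.Bijective fun j => e j i ω) (n : ℕ)
    (p : Fin n → Fin 4) : Equiv.Perm (Fin 4) :=
  Equiv.ofBijective _ (he (walkState e lam i n p).2 (lam (walkState e lam i n p).1))

lemma fst_iterate_baker4 (y : ℝ × ℝ) (n : ℕ) : (baker4^[n] y).1 = fract4^[n] y.1 := by
  induction n generalizing y with
  | zero => rfl
  | succ n ih => exact ih (baker4 y)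

lemma traj4_eq_walkState (y : ℝ × ℝ) (n : ℕ) :
    traj4 e lam (y, i) n = ((walkState e lam i n (seqTake n (digitSeq y.1))).1,
      (baker4^[n] y, (walkState e lam i n (seqTake n (digitSeq y.1))).2)) := by
  induction n with
  | zero => rfl
  | succ n ih =>
    rw [traj4, ih, Function.iterate_succ_apply']
    have hdigit : digit4 (baker4^[n] y).1 = digitSeq y.1 n := by rw [fst_iterate_baker4]; rfl
    simp only [hdigit]
    rfl

lemma walk_relabel_exitPerm (he : ∀ i ω, Function.Bijective fun j => e j i ω) (a : ℕ → Fin 4)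
    (n : ℕ) :
    walk dirG (relabel (exitPerm e lam i he) a) n = (walkState e lam i n (seqTake n a)).1 := by
  induction n with
  | zero => rfl
  | succ n ih =>
    rw [walk, Finset.sum_range_succ, ← walk, ih]
    rfl

end ToyModel

/-- **toy model mimicking the standard random walk: recurrence in every
fiber.** If for every incoming direction `i` and state `ω` the map `j ↦ e(j,i,ω)`
is a bijection onto `G`, then in every environment `lam`, for `μ₁`-almost every
initial condition `x`, the position `γ_n(x, lam)` equals `(0,0)` infinitely often. -/
theorem stmt7 (e : Fin 4 → Fin 4 → Fin 3 → Fin 4)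
    (he : ∀ (i : Fin 4) (ω : Fin 3), Function.Bijective (fun j => e j i ω))
    (lam : (ℤ × ℤ) → Fin 3) :
    ∀ᵐ x ∂muOne, ∃ᶠ n in atTop, (traj4 e lam x n).1 = ((0 : ℤ), (0 : ℤ)) := by
  have hfiber : ∀ i, ∀ᵐ z ∂volume.restrict (Set.Ico (0 : ℝ) 1),
      ∃ᶠ n in atTop, walk dirG (relabel (exitPerm e lam i he) (digitSeq z)) n = 0 := fun i =>
    ae_of_ae_map measurable_digitSeq.aemeasurable <|
      ae_of_ae_map (measurable_relabel _).aemeasurable <|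
        (isUniformBernoulli_digitSeq.map_relabel _).frequently_walk_dirG_eq_zero
  have hsquare : volume.restrict (Set.Ico (0 : ℝ) 1 ×ˢ Set.Ico (0 : ℝ) 1) =
      (volume.restrict (Set.Ico (0 : ℝ) 1)).prod (volume.restrict (Set.Ico (0 : ℝ) 1)) := by
    rw [Measure.prod_restrict, Measure.volume_eq_prod]
  have hall : ∀ᵐ x ∂muOne, ∀ i,
      ∃ᶠ n in atTop, walk dirG (relabel (exitPerm e lam i he) (digitSeq x.1.1)) n = 0 := by
    refine ae_all_iff.2 fun i => ?_
    rw [muOne, hsquare]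
    exact Measure.quasiMeasurePreserving_fst.ae (p := fun y : ℝ × ℝ => ∃ᶠ n in atTop,
      walk dirG (relabel (exitPerm e lam i he) (digitSeq y.1)) n = 0)
        (Measure.quasiMeasurePreserving_fst.ae (hfiber i))
  filter_upwards [hall] with ⟨y, i⟩ h
  simpa only [traj4_eq_walkState, walk_relabel_exitPerm, Prod.mk_zero_zero] using h i
end
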